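/- Let a and b be nonempty finite types, ρ a positive definite matrix of trace 1 on a × b, and τ a positive definite matrix of trace 1 on b. Then D(ρ‖ρ_A ⊗ₖ τ) = D(ρ‖ρ_A ⊗ₖ ρ_B) + D(ρ_B‖τ). -/

import Mathlib

/-!
Diagonalizing `ρ_A = U α U⋆` and a positive definite `σ = V β V⋆`, the Kronecker product
`ρ_A ⊗ σ` is diagonalized by `U ⊗ V` with eigenvalues `α i * β j`, so
`log (ρ_A ⊗ σ) = log ρ_A ⊗ 1 + 1 ⊗ log σ`. Together with `Tr[ρ (1 ⊗ M)] = Tr[ρ_B M]` this gives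
`D(ρ‖ρ_A ⊗ σ) = Re Tr[ρ (log ρ - log ρ_A ⊗ 1)] - Re Tr[ρ_B log σ]`, and subtracting the cases
`σ = τ` and `σ = ρ_B` leaves `Re Tr[ρ_B (log ρ_B - log τ)] = D(ρ_B‖τ)`.
-/

open Matrix Kronecker
open scoped ComplexOrder

/-- matrix logarithm via the continuous functional calculus -/
noncomputable def mlog {n : Type*} [Fintype n] [DecidableEq n] (A : Matrix n n ℂ) :
    Matrix n n ℂ := cfc Real.log A

/-- quantum relative entropy `D(ρ‖σ) = Re Tr[ρ (log ρ − log σ)]` -/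
noncomputable def relEnt {n : Type*} [Fintype n] [DecidableEq n]
    (ρ σ : Matrix n n ℂ) : ℝ := (Matrix.trace (ρ * (mlog ρ - mlog σ))).re

/-- partial trace over `b` -/
noncomputable def ptA {a b : Type*} [Fintype a] [Fintype b]
    (ρ : Matrix (a × b) (a × b) ℂ) : Matrix a a ℂ :=
  Matrix.of fun i i' => ∑ j, ρ (i, j) (i', j)

/-- partial trace over `a` -/
noncomputable def ptB {a b : Type*} [Fintype a] [Fintype b]
    (ρ : Matrix (a × b) (a × b) ℂ) : Matrix b b ℂ :=
  Matrix.of fun j j' => ∑ i, ρ (i, j) (i, j')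

theorem Matrix.mul_diagonal_comp_eq_diagonal_comp_mul {m n R X : Type*} [Fintype m] [Fintype n]
    [DecidableEq m] [DecidableEq n] [CommRing R] [NoZeroDivisors R]
    {ι : X → R} (hι : Function.Injective ι) {V : Matrix m n R} {d : n → X} {e : m → X}
    (h : V * diagonal (ι ∘ d) = diagonal (ι ∘ e) * V) (f : X → R) :
    V * diagonal (f ∘ d) = diagonal (f ∘ e) * V := by
  ext i j
  have hij := congrFun₂ h i j
  simp only [mul_diagonal, diagonal_mul, Function.comp_apply] at hij ⊢
  by_cases hV : V i j = 0
  · simp [hV]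
  · rw [hι (mul_left_cancel₀ hV (hij.trans (mul_comm _ _))), mul_comm]

theorem Matrix.conj_diagonal_comp_eq_of_conj_diagonal_eq {n R X : Type*} [Fintype n]
    [DecidableEq n] [CommRing R] [StarRing R] [NoZeroDivisors R]
    {U P : Matrix n n R} (hU : U ∈ unitary (Matrix n n R)) (hP : P ∈ unitary (Matrix n n R))
    {ι : X → R} (hι : Function.Injective ι) {d e : n → X}
    (h : U * diagonal (ι ∘ d) * star U = P * diagonal (ι ∘ e) * star P) (f : X → R) :
    U * diagonal (f ∘ d) * star U = P * diagonal (f ∘ e) * star P := by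
  have hUU := Unitary.star_mul_self_of_mem hU
  have hUU' := Unitary.mul_star_self_of_mem hU
  have hPP := Unitary.star_mul_self_of_mem hP
  have hPP' := Unitary.mul_star_self_of_mem hP
  have hV : (star P * U) * diagonal (ι ∘ d) = diagonal (ι ∘ e) * (star P * U) :=
    calc (star P * U) * diagonal (ι ∘ d)
        = star P * (U * diagonal (ι ∘ d) * star U) * U := by
          simp only [mul_assoc, hUU, mul_one]
      _ = diagonal (ι ∘ e) * (star P * U) := by
          rw [h]; simp only [← mul_assoc, hPP, one_mul]
  calc U * diagonal (f ∘ d) * star U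
      = P * ((star P * U) * diagonal (f ∘ d)) * star U := by
        simp only [← mul_assoc, hPP', one_mul]
    _ = P * diagonal (f ∘ e) * star P := by
        rw [mul_diagonal_comp_eq_diagonal_comp_mul hι hV]
        simp only [mul_assoc, hUU', mul_one]

/-- Mathlib computes `cfc f` through the particular diagonalization chosen by
`IsHermitian.spectral_theorem`; the previous lemma transfers the result to any other. -/
theorem Matrix.cfc_unitary_conj_diagonal {n 𝕜 : Type*} [RCLike 𝕜] [Fintype n] [DecidableEq n]
    {U : Matrix n n 𝕜} (hU : U ∈ unitary (Matrix n n 𝕜)) (d : n → ℝ) (f : ℝ → ℝ) :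
    cfc f (U * diagonal (RCLike.ofReal ∘ d) * star U) =
      U * diagonal (RCLike.ofReal ∘ f ∘ d) * star U := by
  have hD : IsSelfAdjoint (diagonal (RCLike.ofReal ∘ d) : Matrix n n 𝕜) :=
    isHermitian_diagonal_iff.mpr fun i => RCLike.conj_ofReal _
  have hX : (U * diagonal (RCLike.ofReal ∘ d) * star U).IsHermitian := hD.conjugate U
  have hspec := hX.spectral_theorem
  rw [hX.cfc_eq, IsHermitian.cfc]
  simp only [Unitary.conjStarAlgAut_apply] at hspec ⊢
  exact (conj_diagonal_comp_eq_of_conj_diagonal_eq hU hX.eigenvectorUnitary.2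
    RCLike.ofReal_injective hspec (RCLike.ofReal ∘ f)).symm

theorem Matrix.mul_kronecker_mul_star {a b R : Type*} [Fintype a] [Fintype b] [CommSemiring R]
    [StarRing R]
    (U X : Matrix a a R) (V Y : Matrix b b R) :
    (U ⊗ₖ V) * (X ⊗ₖ Y) * star (U ⊗ₖ V) = (U * X * star U) ⊗ₖ (V * Y * star V) := by
  simp only [star_eq_conjTranspose, conjTranspose_kronecker, mul_kronecker_mul]

section Kronecker
variable {a b : Type*} [Fintype a] [Fintype b] [DecidableEq a] [DecidableEq b]

theorem mlog_unitary_conj_diagonal_kronecker {U : Matrix a a ℂ} {V : Matrix b b ℂ}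
    (hU : U ∈ unitary (Matrix a a ℂ)) (hV : V ∈ unitary (Matrix b b ℂ))
    {α : a → ℝ} {β : b → ℝ} (hα : ∀ i, α i ≠ 0) (hβ : ∀ j, β j ≠ 0) :
    mlog ((U * diagonal (RCLike.ofReal ∘ α) * star U) ⊗ₖ
        (V * diagonal (RCLike.ofReal ∘ β) * star V)) =
      mlog (U * diagonal (RCLike.ofReal ∘ α) * star U) ⊗ₖ (1 : Matrix b b ℂ) +
        (1 : Matrix a a ℂ) ⊗ₖ mlog (V * diagonal (RCLike.ofReal ∘ β) * star V) := by
  have hdiag : diagonal (RCLike.ofReal ∘ α) ⊗ₖ diagonal (RCLike.ofReal ∘ β) =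
      (diagonal (RCLike.ofReal ∘ fun p : a × b => α p.1 * β p.2) :
        Matrix (a × b) (a × b) ℂ) := by
    rw [diagonal_kronecker_diagonal]
    congr 1
    ext p
    simp
  have hlog : (diagonal (RCLike.ofReal ∘ Real.log ∘ fun p : a × b => α p.1 * β p.2) :
      Matrix (a × b) (a × b) ℂ) = diagonal (RCLike.ofReal ∘ Real.log ∘ α) ⊗ₖ 1 +
        1 ⊗ₖ diagonal (RCLike.ofReal ∘ Real.log ∘ β) := by
    rw [← diagonal_one, diagonal_kronecker_diagonal, ← diagonal_one, diagonal_kronecker_diagonal,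
      diagonal_add]
    congr 1
    ext p
    simp only [Function.comp_apply, mul_one, one_mul, Real.log_mul (hα p.1) (hβ p.2)]
    push_cast
    rfl
  rw [← mul_kronecker_mul_star, hdiag]
  simp only [mlog, cfc_unitary_conj_diagonal hU, cfc_unitary_conj_diagonal hV,
    cfc_unitary_conj_diagonal (kronecker_mem_unitary hU hV)]
  rw [hlog, mul_add, add_mul, mul_kronecker_mul_star, mul_kronecker_mul_star, mul_one, mul_one,
    Unitary.mul_star_self_of_mem hU, Unitary.mul_star_self_of_mem hV]

theorem mlog_kronecker {A : Matrix a a ℂ} {B : Matrix b b ℂ} (hA : A.PosDef) (hB : B.PosDef) :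
    mlog (A ⊗ₖ B) = mlog A ⊗ₖ (1 : Matrix b b ℂ) + (1 : Matrix a a ℂ) ⊗ₖ mlog B := by
  rw [hA.1.spectral_theorem, hB.1.spectral_theorem, Unitary.conjStarAlgAut_apply,
    Unitary.conjStarAlgAut_apply]
  exact mlog_unitary_conj_diagonal_kronecker hA.1.eigenvectorUnitary.2
    hB.1.eigenvectorUnitary.2 (fun i => (hA.eigenvalues_pos i).ne')
    (fun j => (hB.eigenvalues_pos j).ne')

end Kronecker

section PartialTrace
variable {a b : Type*} [Fintype a] [Fintype b]

theorem ptA_eq_sum_submatrix (ρ : Matrix (a × b) (a × b) ℂ) :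
    ptA ρ = ∑ j, ρ.submatrix (·, j) (·, j) := by
  ext i i'
  simp [ptA, Matrix.sum_apply]

theorem ptB_eq_sum_submatrix (ρ : Matrix (a × b) (a × b) ℂ) :
    ptB ρ = ∑ i, ρ.submatrix (Prod.mk i) (Prod.mk i) := by
  ext j j'
  simp [ptB, Matrix.sum_apply]

theorem Matrix.PosDef.ptA [Nonempty b] {ρ : Matrix (a × b) (a × b) ℂ} (hρ : ρ.PosDef) :
    (ptA ρ).PosDef := by
  rw [ptA_eq_sum_submatrix]
  exact posDef_sum Finset.univ_nonempty fun j _ =>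
    hρ.submatrix fun i i' h => congrArg Prod.fst h

theorem Matrix.PosDef.ptB [Nonempty a] {ρ : Matrix (a × b) (a × b) ℂ} (hρ : ρ.PosDef) :
    (ptB ρ).PosDef := by
  rw [ptB_eq_sum_submatrix]
  exact posDef_sum Finset.univ_nonempty fun i _ => hρ.submatrix (Prod.mk_right_injective i)

theorem trace_mul_one_kronecker [DecidableEq a] (ρ : Matrix (a × b) (a × b) ℂ)
    (M : Matrix b b ℂ) :
    trace (ρ * ((1 : Matrix a a ℂ) ⊗ₖ M)) = trace (ptB ρ * M) := by
  simp only [trace, diag_apply, mul_apply, kroneckerMap_apply, one_apply, ite_mul, one_mul,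
    zero_mul, mul_ite, mul_zero, Fintype.sum_prod_type, Finset.sum_ite_irrel,
    Finset.sum_const_zero, Finset.sum_ite_eq', Finset.mem_univ, if_true, ptB, of_apply,
    Finset.sum_mul]
  exact Finset.sum_comm.trans (Finset.sum_congr rfl fun _ _ => Finset.sum_comm)

end PartialTrace

theorem relEnt_ptA_kronecker {a b : Type*} [Fintype a] [Fintype b] [DecidableEq a]
    [DecidableEq b] [Nonempty b] {ρ : Matrix (a × b) (a × b) ℂ} (hρ : ρ.PosDef)
    {σ : Matrix b b ℂ} (hσ : σ.PosDef) :
    relEnt ρ (ptA ρ ⊗ₖ σ) =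
      (trace (ρ * (mlog ρ - mlog (ptA ρ) ⊗ₖ (1 : Matrix b b ℂ)))).re -
        (trace (ptB ρ * mlog σ)).re := by
  rw [relEnt, mlog_kronecker hρ.ptA hσ, ← sub_sub, mul_sub, trace_sub, trace_mul_one_kronecker,
    Complex.sub_re]

theorem relEnt_eq_mutualInfo_add_general
    {a b : Type*} [Fintype a] [Fintype b] [DecidableEq a] [DecidableEq b]
    [Nonempty a] [Nonempty b]
    (ρ : Matrix (a × b) (a × b) ℂ) (hρ : ρ.PosDef)
    (τ : Matrix b b ℂ) (hτ : τ.PosDef) :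
    relEnt ρ (ptA ρ ⊗ₖ τ) = relEnt ρ (ptA ρ ⊗ₖ ptB ρ) + relEnt (ptB ρ) τ := by
  rw [relEnt_ptA_kronecker hρ hτ, relEnt_ptA_kronecker hρ hρ.ptB, relEnt, mul_sub (ptB ρ),
    trace_sub, Complex.sub_re]
  ring

/-- **Proposition 4.3, part 1.** The decoherence-free relative entropy equals the
mutual information plus `D(ρ_B‖τ)`:
`D(ρ‖ρ_A ⊗ τ) = D(ρ‖ρ_A ⊗ ρ_B) + D(ρ_B‖τ)`. -/
theorem relEnt_eq_mutualInfo_add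
    {a b : Type*} [Fintype a] [Fintype b] [DecidableEq a] [DecidableEq b]
    [Nonempty a] [Nonempty b]
    (ρ : Matrix (a × b) (a × b) ℂ) (hρ : ρ.PosDef) (hρtr : Matrix.trace ρ = 1)
    (τ : Matrix b b ℂ) (hτ : τ.PosDef) (hτtr : Matrix.trace τ = 1) :
    relEnt ρ (ptA ρ ⊗ₖ τ) = relEnt ρ (ptA ρ ⊗ₖ ptB ρ) + relEnt (ptB ρ) τ :=
  relEnt_eq_mutualInfo_add_general ρ hρ τ hτ
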